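/- arXiv:1505.06868 — 2 statements merged into one kernel-verified Lean document; each statement's English description precedes it below -/
import Mathlib

section
/- Under Assumptions (iii) and (iv) with m_F > 0, suppose in addition that x ↦ F(x,y,z) is continuous uniformly with respect to y and z, i.e. for every x ∈ ℝ^d and ε > 0 there exists δ = δ(x,ε) > 0 such that |F(x,y,z) − F(x',y,z)| ≤ ε whenever |x − x'| ≤ δ, for all (y,z) ∈ ℝ × ℝ^d. Then for every a ∈ ℝ^d and y ∈ ℝ, the map x ↦ f(x,a,y) is continuous on ℝ^d. -/
open Real RealInnerProductSpace

theorem conjugate_continuous_in_x_uniform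
    (d : ℕ) (hd : 1 ≤ d)
    (F : EuclideanSpace ℝ (Fin d) → ℝ → EuclideanSpace ℝ (Fin d) → ℝ)
    (L_F : ℝ) (hLF : 0 ≤ L_F)
    (hLip : ∀ (x z : EuclideanSpace ℝ (Fin d)) (y y' : ℝ),
      |F x y z - F x y' z| ≤ L_F * |y - y'|)
    (m_F M_F p q p_F q_F : ℝ)
    (hmF : 0 < m_F) (hMF : 0 ≤ M_F) (hpq : p ≤ q) (hp : 1 < p)
    (hpF : 0 ≤ p_F) (hqF : 0 ≤ q_F)
    (hconv : ∀ (x : EuclideanSpace ℝ (Fin d)) (y : ℝ),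
      ConvexOn ℝ Set.univ (fun z => F x y z))
    (hlow : ∀ (x z : EuclideanSpace ℝ (Fin d)),
      -m_F * (1 + ‖x‖ ^ p_F - ‖z‖ ^ p / p) ≤ F x 0 z)
    (hup : ∀ (x z : EuclideanSpace ℝ (Fin d)),
      F x 0 z ≤ M_F * (1 + ‖x‖ ^ q_F + ‖z‖ ^ q / q))
    (hUC : ∀ (x : EuclideanSpace ℝ (Fin d)) (ε : ℝ), 0 < ε → ∃ δ > 0,
      ∀ (x' : EuclideanSpace ℝ (Fin d)) (y : ℝ) (z : EuclideanSpace ℝ (Fin d)),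
        ‖x - x'‖ ≤ δ → |F x y z - F x' y z| ≤ ε)
    (f : EuclideanSpace ℝ (Fin d) → EuclideanSpace ℝ (Fin d) → ℝ → ℝ)
    (hf : ∀ x a y, f x a y
      = -sInf {r : ℝ | ∃ z : EuclideanSpace ℝ (Fin d), r = ⟪a, z⟫ + F x y z})
    (a : EuclideanSpace ℝ (Fin d)) (y : ℝ) :
    Continuous (fun x : EuclideanSpace ℝ (Fin d) => f x a y) := by
  have hp0 : 0 < p := lt_trans one_pos hp
  have hpne : p ≠ 0 := ne_of_gt hp0
  -- The set whose infimum defines f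
  set S : EuclideanSpace ℝ (Fin d) → Set ℝ :=
    fun x => {r : ℝ | ∃ z : EuclideanSpace ℝ (Fin d), r = ⟪a, z⟫ + F x y z} with hS
  have hne : ∀ x, (S x).Nonempty := fun x => ⟨⟪a, (0:EuclideanSpace ℝ (Fin d))⟫ + F x y 0, 0, rfl⟩
  -- Young-type bound: ‖a‖ * t ≤ (m_F/p) * t^p + B for t ≥ 0
  obtain ⟨B, hB⟩ : ∃ B : ℝ, ∀ t : ℝ, 0 ≤ t → ‖a‖ * t ≤ m_F / p * t ^ p + B := by
    set c : ℝ := m_F ^ p⁻¹ with hc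
    have hcpos : 0 < c := Real.rpow_pos_of_pos hmF _
    set pq : ℝ := Real.conjExponent p with hpq'
    have hconj : p.HolderConjugate pq := Real.HolderConjugate.conjExponent hp
    refine ⟨(‖a‖ / c) ^ pq / pq, fun t ht => ?_⟩
    have h1 : ‖a‖ * t = (c * t) * (‖a‖ / c) := by field_simp
    have h2 := Real.young_inequality_of_nonneg
      (mul_nonneg hcpos.le ht) (div_nonneg (norm_nonneg a) hcpos.le) hconj
    have h3 : (c * t) ^ p = m_F * t ^ p := by
      rw [Real.mul_rpow hcpos.le ht, hc, Real.rpow_inv_rpow hmF.le hpne]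
    rw [h1]
    calc (c * t) * (‖a‖ / c) ≤ (c * t) ^ p / p + (‖a‖ / c) ^ pq / pq := h2
      _ = m_F / p * t ^ p + (‖a‖ / c) ^ pq / pq := by rw [h3]; ring
  -- uniform-in-z lower bound for the terms, hence BddBelow
  have hterm : ∀ x z, -B - m_F * (1 + ‖x‖ ^ p_F) - L_F * |y| ≤ ⟪a, z⟫ + F x y z := by
    intro x z
    have h1 : -(‖a‖ * ‖z‖) ≤ ⟪a, z⟫ :=
      neg_le_of_abs_le (abs_real_inner_le_norm a z)
    have h2 : F x 0 z - L_F * |y| ≤ F x y z := by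
      have := hLip x z y 0
      rw [sub_zero] at this
      have := abs_le.1 this
      linarith [this.2]
    have h3 := hlow x z
    have h4 := hB ‖z‖ (norm_nonneg z)
    have h5 : -m_F * (1 + ‖x‖ ^ p_F - ‖z‖ ^ p / p)
        = -m_F * (1 + ‖x‖ ^ p_F) + m_F / p * ‖z‖ ^ p := by ring
    rw [h5] at h3
    linarith
  have hbdd : ∀ x, BddBelow (S x) := by
    intro x
    exact ⟨-B - m_F * (1 + ‖x‖ ^ p_F) - L_F * |y|, fun r hr => by
      obtain ⟨z, rfl⟩ := hr; exact hterm x z⟩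
  -- key comparison lemma
  have hkey : ∀ (x x' : EuclideanSpace ℝ (Fin d)) (ε : ℝ),
      (∀ z, |F x y z - F x' y z| ≤ ε) → sInf (S x') ≤ sInf (S x) + ε := by
    intro x x' ε hε
    have : sInf (S x') - ε ≤ sInf (S x) := by
      apply le_csInf (hne x)
      rintro r ⟨z, rfl⟩
      have h1 : sInf (S x') ≤ ⟪a, z⟫ + F x' y z := csInf_le (hbdd x') ⟨z, rfl⟩
      have h2 := abs_le.1 (hε z)
      linarith [h2.1]
    linarith
  -- continuity
  rw [continuous_iff_continuousAt]
  intro x₀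
  rw [Metric.continuousAt_iff]
  intro ε hε
  obtain ⟨δ, hδ, hδ'⟩ := hUC x₀ (ε / 3) (by linarith)
  refine ⟨δ, hδ, fun x' hx' => ?_⟩
  have hnorm : ‖x₀ - x'‖ ≤ δ := by
    rw [norm_sub_rev]
    exact le_of_lt (by rwa [dist_eq_norm] at hx')
  have hab : ∀ z, |F x₀ y z - F x' y z| ≤ ε / 3 := fun z => hδ' x' y z hnorm
  have hba : ∀ z, |F x' y z - F x₀ y z| ≤ ε / 3 := fun z => by
    rw [abs_sub_comm]; exact hab z
  have h1 := hkey x₀ x' (ε / 3) hab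
  have h2 := hkey x' x₀ (ε / 3) hba
  rw [Real.dist_eq, hf, hf]
  have : |-(sInf (S x')) - -(sInf (S x₀))| ≤ ε / 3 := by
    rw [abs_le]; constructor <;> simp only [neg_sub_neg] <;> linarith
  calc |-(sInf (S x')) - -(sInf (S x₀))| ≤ ε / 3 := this
    _ < ε := by linarith
end

section
/- There exist real constants A, B, C such that the function β : ℝ → ℝ defined piecewise by β(x) = eˣ − 1 for x ≥ log 2, β(x) = Ax⁵ + Bx³ + Cx for −log 2 ≤ x < log 2, and β(x) = 1 − e⁻ˣ for x < −log 2, is twice continuously differentiable on ℝ and strictly increasing, hence a bijection from ℝ onto ℝ; moreover its inverse α satisfies α(y) = log(1 + y) for y ≥ 1 and α(y) = −log(1 − y) for y ≤ −1. -/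
/-!
Write `ℓ = log 2` and `P x = A x⁵ + B x³ + C x`. Gluing two functions at a point yields a
differentiable function, with the glued derivatives as derivative, as soon as values and
derivatives agree at the seam; so `β` is `C²` once `P`, `P'`, `P''` match the exponential branches
at `±ℓ`. As `P` is odd and the left branch is the odd reflection of the right one, matching at `ℓ`
suffices, which is a linear system for `A, B, C`. For monotonicity, `β' > 0`: on `[-ℓ, ℓ]`, `P'`
is a concave quadratic in `x²` (as `A < 0`) that is positive at both ends `x² = 0` and `x² = ℓ²`.
Finally `β` tends to `±∞`, so it is onto, and `α` is read off the exponential branches.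
-/

open Real Filter Set Topology

noncomputable section

def pasteAt (a : ℝ) (f g : ℝ → ℝ) (x : ℝ) : ℝ := if a ≤ x then g x else f x

section Paste

variable {a x : ℝ} {f g h : ℝ → ℝ}

theorem pasteAt_of_lt (hx : x < a) : pasteAt a f g x = f x := if_neg hx.not_ge

theorem pasteAt_of_ge (hx : a ≤ x) : pasteAt a f g x = g x := if_pos hx

theorem pasteAt_of_le (hfg : f a = g a) (hx : x ≤ a) : pasteAt a f g x = f x := by
  rcases hx.lt_or_eq with hx | rfl
  · exact pasteAt_of_lt hx
  · exact (pasteAt_of_ge le_rfl).trans hfg.symm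

theorem continuous_pasteAt (hf : Continuous f) (hg : Continuous g) (hfg : f a = g a) :
    Continuous (pasteAt a f g) :=
  hg.if_le hf continuous_const continuous_id fun x hx => by obtain rfl : a = x := hx; exact hfg.symm

theorem hasDerivAt_pasteAt {f' g' : ℝ → ℝ} (hf : ∀ x, HasDerivAt f (f' x) x)
    (hg : ∀ x, HasDerivAt g (g' x) x) (hfg : f a = g a) (hfg' : f' a = g' a) (x : ℝ) :
    HasDerivAt (pasteAt a f g) (pasteAt a f' g' x) x := by
  rcases lt_trichotomy x a with hx | rfl | hx
  · rw [pasteAt_of_lt hx]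
    refine (hf x).congr_of_eventuallyEq ?_
    filter_upwards [Iio_mem_nhds hx] with y hy using pasteAt_of_lt hy
  · have hleft : HasDerivWithinAt (pasteAt x f g) (g' x) (Iic x) x :=
      hfg' ▸ (hf x).hasDerivWithinAt.congr_of_mem (fun _ hy => pasteAt_of_le hfg hy) self_mem_Iic
    have hright : HasDerivWithinAt (pasteAt x f g) (g' x) (Ici x) x :=
      (hg x).hasDerivWithinAt.congr_of_mem (fun _ hy => pasteAt_of_ge hy) self_mem_Ici
    rw [pasteAt_of_ge le_rfl]
    simpa [Iic_union_Ici] using hleft.union hright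
  · rw [pasteAt_of_ge hx.le]
    refine (hg x).congr_of_eventuallyEq ?_
    filter_upwards [Ioi_mem_nhds hx] with y hy using pasteAt_of_ge hy.le

theorem hasDerivAt_pasteAt_pasteAt {b : ℝ} {f' g' h' : ℝ → ℝ} (hab : a ≤ b)
    (hf : ∀ x, HasDerivAt f (f' x) x) (hg : ∀ x, HasDerivAt g (g' x) x)
    (hh : ∀ x, HasDerivAt h (h' x) x) (hfg : f a = g a) (hfg' : f' a = g' a)
    (hgh : g b = h b) (hgh' : g' b = h' b) (x : ℝ) :
    HasDerivAt (pasteAt b (pasteAt a f g) h) (pasteAt b (pasteAt a f' g') h' x) x :=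
  hasDerivAt_pasteAt (hasDerivAt_pasteAt hf hg hfg hfg') hh
    (by rwa [pasteAt_of_ge hab]) (by rwa [pasteAt_of_ge hab]) x

theorem continuous_pasteAt_pasteAt {b : ℝ} (hab : a ≤ b) (hf : Continuous f) (hg : Continuous g)
    (hh : Continuous h) (hfg : f a = g a) (hgh : g b = h b) :
    Continuous (pasteAt b (pasteAt a f g) h) :=
  continuous_pasteAt (continuous_pasteAt hf hg hfg) hh (by rwa [pasteAt_of_ge hab])

end Paste

theorem contDiff_two_of_hasDerivAt {F F' F'' : ℝ → ℝ} (hF : ∀ x, HasDerivAt F (F' x) x)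
    (hF' : ∀ x, HasDerivAt F' (F'' x) x) (hF'' : Continuous F'') : ContDiff ℝ 2 F := by
  rw [show (2 : WithTop ℕ∞) = 1 + 1 from rfl, contDiff_succ_iff_deriv,
    show deriv F = F' from funext fun x => (hF x).deriv, contDiff_one_iff_deriv,
    show deriv F' = F'' from funext fun x => (hF' x).deriv]
  exact ⟨fun x => (hF x).differentiableAt, by simp, fun x => (hF' x).differentiableAt, hF''⟩

local notation "ℓ" => Real.log 2

-- The solution of `P ℓ = 1`, `P' ℓ = P'' ℓ = 2` (the values of `exp x - 1` and its derivatives).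
def betaA : ℝ := (3 - 6 * ℓ + 2 * ℓ ^ 2) / (8 * ℓ ^ 5)
def betaB : ℝ := (-2 * ℓ ^ 2 + 10 * ℓ - 5) / (4 * ℓ ^ 3)
def betaC : ℝ := (2 * ℓ ^ 2 - 14 * ℓ + 15) / (8 * ℓ)

def betaPoly (x : ℝ) : ℝ := betaA * x ^ 5 + betaB * x ^ 3 + betaC * x
def betaPoly' (x : ℝ) : ℝ := 5 * betaA * x ^ 4 + 3 * betaB * x ^ 2 + betaC
def betaPoly'' (x : ℝ) : ℝ := 20 * betaA * x ^ 3 + 6 * betaB * x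

theorem hasDerivAt_betaPoly (x : ℝ) : HasDerivAt betaPoly (betaPoly' x) x := by
  have := (((hasDerivAt_pow 5 x).const_mul betaA).add ((hasDerivAt_pow 3 x).const_mul betaB)).add
    ((hasDerivAt_id x).const_mul betaC)
  exact this.congr_deriv (by simp only [betaPoly']; push_cast; ring)

theorem hasDerivAt_betaPoly' (x : ℝ) : HasDerivAt betaPoly' (betaPoly'' x) x := by
  have := (((hasDerivAt_pow 4 x).const_mul (5 * betaA)).add
    ((hasDerivAt_pow 2 x).const_mul (3 * betaB))).add_const betaC
  exact this.congr_deriv (by simp only [betaPoly'']; push_cast; ring)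

theorem betaPoly_log_two : betaPoly ℓ = 1 := by
  have := (log_pos one_lt_two).ne'
  simp only [betaPoly, betaA, betaB, betaC]; field_simp; ring

theorem betaPoly'_log_two : betaPoly' ℓ = 2 := by
  have := (log_pos one_lt_two).ne'
  simp only [betaPoly', betaA, betaB, betaC]; field_simp; ring

theorem betaPoly''_log_two : betaPoly'' ℓ = 2 := by
  have := (log_pos one_lt_two).ne'
  simp only [betaPoly'', betaA, betaB]; field_simp; ring

theorem betaA_neg : betaA < 0 :=
  div_neg_of_neg_of_pos (by nlinarith [log_two_gt_d9, log_two_lt_d9])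
    (by have := log_pos one_lt_two; positivity)

theorem betaC_pos : 0 < betaC :=
  div_pos (by nlinarith [log_two_gt_d9, log_two_lt_d9])
    (by have := log_pos one_lt_two; positivity)

theorem betaPoly'_pos {x : ℝ} (hx : x ^ 2 ≤ ℓ ^ 2) : 0 < betaPoly' x := by
  -- `P'` minus its linear interpolation, in the variable `x²`, between `x² = 0` and `x² = ℓ²`
  have key : ℓ ^ 2 * betaPoly' x = 5 * betaA * ℓ ^ 2 * x ^ 2 * (x ^ 2 - ℓ ^ 2)
      + betaC * (ℓ ^ 2 - x ^ 2) + 2 * x ^ 2 := by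
    have := betaPoly'_log_two
    simp only [betaPoly'] at this ⊢
    linear_combination x ^ 2 * this
  have hconcave : 0 ≤ 5 * betaA * ℓ ^ 2 * x ^ 2 * (x ^ 2 - ℓ ^ 2) := by
    have := mul_nonneg_of_nonpos_of_nonpos betaA_neg.le (sub_nonpos.2 hx)
    have := mul_nonneg (mul_nonneg (sq_nonneg ℓ) (sq_nonneg x)) this
    linarith
  have hends : 0 < betaC * (ℓ ^ 2 - x ^ 2) + 2 * x ^ 2 := by
    rcases hx.lt_or_eq with hlt | heq
    · nlinarith [mul_pos betaC_pos (sub_pos.2 hlt), sq_nonneg x]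
    · rw [heq, sub_self, mul_zero, zero_add]; positivity
  exact pos_of_mul_pos_right (by rw [key]; linarith) (sq_nonneg ℓ)

theorem betaPoly_neg (x : ℝ) : betaPoly (-x) = -betaPoly x := by simp only [betaPoly]; ring
theorem betaPoly'_neg (x : ℝ) : betaPoly' (-x) = betaPoly' x := by simp only [betaPoly']; ring
theorem betaPoly''_neg (x : ℝ) : betaPoly'' (-x) = -betaPoly'' x := by simp only [betaPoly'']; ring

def beta : ℝ → ℝ :=
  pasteAt ℓ (pasteAt (-ℓ) (fun x => 1 - exp (-x)) betaPoly) (fun x => exp x - 1)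
def beta' : ℝ → ℝ := pasteAt ℓ (pasteAt (-ℓ) (fun x => exp (-x)) betaPoly') exp
def beta'' : ℝ → ℝ := pasteAt ℓ (pasteAt (-ℓ) (fun x => -exp (-x)) betaPoly'') exp

theorem hasDerivAt_beta (x : ℝ) : HasDerivAt beta (beta' x) x := by
  refine hasDerivAt_pasteAt_pasteAt (neg_le_self (log_pos one_lt_two).le)
    (fun x => ?_) hasDerivAt_betaPoly (fun x => (hasDerivAt_exp x).sub_const 1) ?_ ?_ ?_ ?_ x
  · simpa using ((hasDerivAt_neg x).exp).const_sub 1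
  all_goals norm_num [betaPoly_neg, betaPoly'_neg, betaPoly_log_two, betaPoly'_log_two, exp_log]

theorem hasDerivAt_beta' (x : ℝ) : HasDerivAt beta' (beta'' x) x := by
  refine hasDerivAt_pasteAt_pasteAt (neg_le_self (log_pos one_lt_two).le)
    (fun x => ?_) hasDerivAt_betaPoly' hasDerivAt_exp ?_ ?_ ?_ ?_ x
  · simpa using (hasDerivAt_neg x).exp
  all_goals simp [betaPoly'_neg, betaPoly''_neg, betaPoly'_log_two, betaPoly''_log_two, exp_log]

theorem continuous_beta'' : Continuous beta'' := by
  refine continuous_pasteAt_pasteAt (neg_le_self (log_pos one_lt_two).le) (by fun_prop)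
    (by unfold betaPoly''; fun_prop) continuous_exp ?_ ?_
  all_goals simp [betaPoly''_neg, betaPoly''_log_two, exp_log]

theorem contDiff_beta : ContDiff ℝ 2 beta :=
  contDiff_two_of_hasDerivAt hasDerivAt_beta hasDerivAt_beta' continuous_beta''

theorem beta'_pos (x : ℝ) : 0 < beta' x := by
  unfold beta' pasteAt
  split_ifs with h₁ h₂
  · exact exp_pos x
  · exact betaPoly'_pos (sq_le_sq' h₂ (not_le.1 h₁).le)
  · exact exp_pos (-x)

theorem strictMono_beta : StrictMono beta :=
  strictMono_of_deriv_pos fun x => (hasDerivAt_beta x).deriv ▸ beta'_pos x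

theorem beta_of_ge {x : ℝ} (hx : ℓ ≤ x) : beta x = exp x - 1 := pasteAt_of_ge hx

theorem beta_of_le {x : ℝ} (hx : x ≤ -ℓ) : beta x = 1 - exp (-x) := by
  have hℓ := log_pos one_lt_two
  rw [beta, pasteAt_of_lt (by linarith), pasteAt_of_le _ hx]
  norm_num [betaPoly_neg, betaPoly_log_two, exp_log]

theorem tendsto_beta_atTop : Tendsto beta atTop atTop := by
  refine (tendsto_atTop_add_const_right _ (-1) tendsto_exp_atTop).congr' ?_
  filter_upwards [eventually_ge_atTop ℓ] with x hx
  rw [beta_of_ge hx, sub_eq_add_neg]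

theorem tendsto_beta_atBot : Tendsto beta atBot atBot := by
  refine (tendsto_atBot_add_const_left _ 1
    (tendsto_neg_atTop_atBot.comp (tendsto_exp_atTop.comp tendsto_neg_atBot_atTop))).congr' ?_
  filter_upwards [eventually_le_atBot (-ℓ)] with x hx
  rw [beta_of_le hx, sub_eq_add_neg]; rfl

theorem bijective_beta : Function.Bijective beta :=
  ⟨strictMono_beta.injective,
    contDiff_beta.continuous.surjective tendsto_beta_atTop tendsto_beta_atBot⟩

theorem beta_log_one_add {y : ℝ} (hy : 1 ≤ y) : beta (log (1 + y)) = y := by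
  rw [beta_of_ge (log_le_log two_pos (by linarith)), exp_log (by linarith)]; ring

theorem beta_neg_log_one_sub {y : ℝ} (hy : y ≤ -1) : beta (-log (1 - y)) = y := by
  rw [beta_of_le (neg_le_neg (log_le_log two_pos (by linarith))), neg_neg, exp_log (by linarith)]
  ring

end

theorem smooth_paste_beta :
    ∃ A B C : ℝ, ∃ β α : ℝ → ℝ,
      (∀ x : ℝ, β x =
        if Real.log 2 ≤ x then Real.exp x - 1
        else if -Real.log 2 ≤ x then A * x ^ 5 + B * x ^ 3 + C * x
        else 1 - Real.exp (-x)) ∧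
      ContDiff ℝ 2 β ∧
      StrictMono β ∧
      Function.Bijective β ∧
      Function.LeftInverse α β ∧
      Function.RightInverse α β ∧
      (∀ y : ℝ, 1 ≤ y → α y = Real.log (1 + y)) ∧
      (∀ y : ℝ, y ≤ -1 → α y = -Real.log (1 - y)) := by
  have hinv := Function.leftInverse_invFun bijective_beta.injective
  refine ⟨betaA, betaB, betaC, beta, Function.invFun beta, fun x => rfl, contDiff_beta,
    strictMono_beta, bijective_beta, hinv, Function.rightInverse_invFun bijective_beta.surjective,
    fun y hy => ?_, fun y hy => ?_⟩
  · simpa only [beta_log_one_add hy] using hinv (log (1 + y))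
  · simpa only [beta_neg_log_one_sub hy] using hinv (-log (1 - y))
end
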